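/- arXiv:math/0104254 — 3 statements merged into one kernel-verified Lean document; each statement's English description precedes it below -/
import Mathlib

section
/- Let n, r, d be positive integers with r ≤ n and r^2 ≤ d^2 * n. For integers i ≥ 0, write i*(n - r) = q*n + ρ with 0 ≤ ρ < n. Then i*(n-r)*(r/n) ≤ r*q + min(ρ, r) ≤ i*(n-r)*(r/n) + r - r^2/n, as inequalities of rational numbers. -/
theorem stmt_8 (n r d i q ρ : ℤ) (hn : 0 < n) (hr : 0 < r) (hd : 0 < d)
    (hrn : r ≤ n) (hrd : r ^ 2 ≤ d ^ 2 * n) (hi : 0 ≤ i)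
    (hq : i * (n - r) = q * n + ρ) (hρ1 : 0 ≤ ρ) (hρ2 : ρ < n) :
    (i : ℚ) * (n - r) * (r / n) ≤ (r : ℚ) * q + ((min ρ r : ℤ) : ℚ) ∧
    (r : ℚ) * q + ((min ρ r : ℤ) : ℚ) ≤ (i : ℚ) * (n - r) * (r / n) + r - r ^ 2 / n := by
  have hnQ : (0:ℚ) < n := by exact_mod_cast hn
  have h1 : i * (n - r) * r ≤ (r * q + min ρ r) * n := by
    rcases le_or_gt ρ r with h | h
    · rw [min_eq_left h]; nlinarith [hq]
    · rw [min_eq_right h.le]; nlinarith [hq]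
  have h2 : (r * q + min ρ r) * n ≤ i * (n - r) * r + r * n - r ^ 2 := by
    rcases le_or_gt ρ r with h | h
    · rw [min_eq_left h]; nlinarith [hq]
    · rw [min_eq_right h.le]; nlinarith [hq]
  constructor
  · rw [mul_div_assoc', div_le_iff₀ hnQ]
    push_cast
    exact_mod_cast h1
  · have he : (i : ℚ) * (n - r) * (r / n) + r - r ^ 2 / n
        = ((i : ℚ) * (n - r) * r + r * n - r ^ 2) / n := by
      field_simp
    rw [he, le_div_iff₀ hnQ]
    push_cast
    exact_mod_cast h2
end

section
/- Let n, r, d, m, t be integers with 0 < r ≤ n. Define C = (d, 1,...,1, 0,...,0) (with r ones) and D_0 = (t, m, m, ..., m) as (n+1)-tuples. For 0 ≤ i < ω' (where ω' = ⌈mn/r⌉ is the least i such that all entries of D_i except possibly the first vanish), writing i(n-r) = qn + ρ with 0 ≤ ρ < n, one has D_i = (t - i*d, m-i+q, ..., m-i+q) + A_ρ, where A_ρ has ρ ones in positions 2 through ρ+1 and D_i is obtained from D_{i-1} - C by zeroing negative entries (after the first) and sorting entries 2 through n+1 in descending order. -/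
/-! Write the tail of `D_i` as `k` entries `x + 1` followed by `n - k` entries `x`. One step
lowers the `r` largest entries by one. If `r ≤ k` this only moves `r` entries from level `x + 1`
down to level `x`; if `k < r`, all entries of level `x + 1` drop to `x` and `r - k` entries of level
`x` drop to `x - 1`, so the tail becomes a two-level list one level lower with `n - r + k` entries
on top. In both cases `k` changes by `n - r` modulo `n` and the level by `-1` plus the carry, which
is the division `i (n - r) = q n + ρ`. The bound `i < ⌈m n / r⌉` keeps the levels nonnegative, so
the truncation at `0` never acts. -/

/-- One step of the recursion of Lemma II.4: subtract `C = (d,1,…,1,0,…,0)`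
(with `r` ones, applied to the `r` largest tail entries since the tail is kept
sorted descending), replace negative tail entries by `0`, and re-sort the tail
in descending order.  A tuple `D = (t, m₁, …, m_n)` is represented as a pair of
its first entry and the list of its remaining `n` entries. -/
def fatStep (d : ℤ) (r : ℕ) (p : ℤ × List ℤ) : ℤ × List ℤ :=
  (p.1 - d,
    ((p.2.take r).map (fun a => max (a - 1) 0) ++ p.2.drop r).insertionSort (· ≥ ·))

/-- The sequence `D_i` starting from `D_0 = (t, m, …, m)` (with `n` copies of `m`). -/
def fatD (d : ℤ) (r n : ℕ) (t m : ℤ) : ℕ → ℤ × List ℤ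
  | 0 => (t, List.replicate n m)
  | i + 1 => fatStep d r (fatD d r n t m i)

open List

theorem List.insertionSort_ge_eq_of_perm_replicate {α : Type*} [LinearOrder α] {l : List α}
    {x y : α} {a b : ℕ} (hyx : y ≤ x) (h : l ~ replicate a x ++ replicate b y) :
    l.insertionSort (· ≥ ·) = replicate a x ++ replicate b y := by
  refine ((perm_insertionSort _ _).trans h).eq_of_pairwise' (pairwise_insertionSort _ _) ?_
  simp only [pairwise_append, pairwise_replicate, mem_replicate]
  exact ⟨Or.inr le_rfl, Or.inr le_rfl, by rintro _ ⟨-, rfl⟩ _ ⟨-, rfl⟩; exact hyx⟩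

theorem Int.lt_ceil_div_iff_mul_lt {z a : ℤ} {b : ℕ} (hb : 0 < b) :
    z < ⌈(a : ℚ) / b⌉ ↔ z * b < a := by
  rw [Int.lt_ceil, lt_div_iff₀ (by exact_mod_cast hb)]
  exact_mod_cast Iff.rfl

def twoLevelTail (n k : ℕ) (x : ℤ) : List ℤ :=
  replicate k (x + 1) ++ replicate (n - k) x

section fatStep

variable {d s x : ℤ} {r n k : ℕ}

theorem fatStep_twoLevelTail_of_le (hrk : r ≤ k) (hkn : k ≤ n) (hx : 0 ≤ x) :
    fatStep d r (s, twoLevelTail n k x) = (s - d, twoLevelTail n (k - r) x) := by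
  have htake : (twoLevelTail n k x).take r = replicate r (x + 1) := by
    simp [twoLevelTail, take_append, take_replicate, Nat.sub_eq_zero_of_le hrk, hrk]
  have hdrop : (twoLevelTail n k x).drop r = replicate (k - r) (x + 1) ++ replicate (n - k) x := by
    simp [twoLevelTail, drop_append, drop_replicate, Nat.sub_eq_zero_of_le hrk]
  rw [fatStep, htake, hdrop, map_replicate, max_eq_left (by omega), add_sub_cancel_right]
  refine Prod.ext rfl (insertionSort_ge_eq_of_perm_replicate (by omega) ?_)
  rw [show n - (k - r) = r + (n - k) by omega, replicate_add]
  exact perm_append_comm_assoc _ _ _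

theorem fatStep_twoLevelTail_of_lt (hkr : k < r) (hrn : r ≤ n) (hx : 0 ≤ x) :
    fatStep d r (s, twoLevelTail n k (x + 1)) = (s - d, twoLevelTail n (n - r + k) x) := by
  have htake : (twoLevelTail n k (x + 1)).take r =
      replicate k (x + 1 + 1) ++ replicate (r - k) (x + 1) := by
    simp only [twoLevelTail, take_append, take_replicate, length_replicate]
    congr 2 <;> omega
  have hdrop : (twoLevelTail n k (x + 1)).drop r = replicate (n - r) (x + 1) := by
    simp only [twoLevelTail, drop_append, drop_replicate, length_replicate,
      Nat.sub_eq_zero_of_le hkr.le, replicate_zero, nil_append]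
    congr 1
    omega
  rw [fatStep, htake, hdrop, map_append, map_replicate, map_replicate, add_sub_cancel_right,
    add_sub_cancel_right, max_eq_left (by omega), max_eq_left hx]
  refine Prod.ext rfl (insertionSort_ge_eq_of_perm_replicate (by omega) ?_)
  rw [show n - (n - r + k) = r - k by omega, add_comm (n - r), replicate_add]
  simpa only [append_assoc] using perm_append_comm.append_left _

end fatStep

theorem fatD_eq_twoLevelTail {d t m : ℤ} {r n : ℕ} (hrn : r ≤ n) {i : ℕ}
    (hi : (i : ℤ) * r < m * n) {q : ℤ} {k : ℕ} (hqk : (i : ℤ) * (n - r) = q * n + k)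
    (hkn : k < n) :
    fatD d r n t m i = (t - i * d, twoLevelTail n k (m - i + q)) := by
  induction i generalizing q k with
  | zero =>
    have hqn : q * n = -k := by push_cast at hqk; linarith
    obtain rfl : q = 0 := by
      rcases lt_trichotomy q 0 with hq | hq | hq <;> [nlinarith; exact hq; nlinarith]
    obtain rfl : k = 0 := by omega
    simp [fatD, twoLevelTail]
  | succ i ih =>
    have hi' : (i : ℤ) * r < m * n := by push_cast at hi; nlinarith
    have hlevel : 0 ≤ m - (i + 1) + q := by
      have : (n : ℤ) * (m - (i + 1) + q) + k = m * n - (i + 1) * r := by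
        push_cast at hqk; linear_combination -hqk
      push_cast at hi; nlinarith
    rw [fatD]
    push_cast at hqk ⊢
    rcases le_or_gt (n - r) k with hk | hk
    · rw [ih hi' (q := q) (k := k - (n - r)) (by push_cast [hk, hrn]; linear_combination hqk)
        (by omega), show m - i + q = m - (i + 1) + q + 1 by ring,
        fatStep_twoLevelTail_of_lt (by omega) hrn hlevel, show n - r + (k - (n - r)) = k by omega]
      ring_nf
    · rw [ih hi' (q := q - 1) (k := k + r) (by push_cast; linear_combination hqk) (by omega),
        show m - i + (q - 1) = m - (i + 1) + q by ring,
        fatStep_twoLevelTail_of_le (by omega) (by omega) hlevel, Nat.add_sub_cancel]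
      ring_nf

theorem stmt_9_general (n r : ℕ) (d m t : ℤ) (hr : 0 < r) (hrn : r ≤ n)
    (i : ℕ) (hi : (i : ℤ) < ⌈((m * n : ℤ) : ℚ) / (r : ℚ)⌉)
    (q ρ : ℤ) (hqρ : (i : ℤ) * ((n : ℤ) - (r : ℤ)) = q * n + ρ)
    (hρ1 : 0 ≤ ρ) (hρ2 : ρ < n) :
    fatD d r n t m i =
      (t - i * d,
        List.replicate ρ.toNat (m - i + q + 1) ++
          List.replicate (n - ρ.toNat) (m - i + q)) := by
  obtain ⟨k, rfl⟩ := Int.eq_ofNat_of_zero_le hρ1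
  exact fatD_eq_twoLevelTail hrn ((Int.lt_ceil_div_iff_mul_lt hr).1 hi) hqρ (by omega)

theorem stmt_9 (n r : ℕ) (d m t : ℤ) (hr : 0 < r) (hrn : r ≤ n) (hm : 0 ≤ m)
    (i : ℕ) (hi : (i : ℤ) < ⌈((m * n : ℤ) : ℚ) / (r : ℚ)⌉)
    (q ρ : ℤ) (hqρ : (i : ℤ) * ((n : ℤ) - (r : ℤ)) = q * n + ρ)
    (hρ1 : 0 ≤ ρ) (hρ2 : ρ < n) :
    fatD d r n t m i =
      (t - i * d,
        List.replicate ρ.toNat (m - i + q + 1) ++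
          List.replicate (n - ρ.toNat) (m - i + q)) :=
  stmt_9_general n r d m t hr hrn i hi q ρ hqρ hρ1 hρ2
end

section
/- With notation as in the tuple recursion (D_0 = (t,m,...,m), C = (d,1,...,1,0,...,0) with r ones, and D_i defined by subtracting C, truncating negatives to 0, and sorting), for all 0 ≤ i ≤ ω'-1: i*(r^2/n - d^2) - (r - r^2/n) ≤ D_i·C - D_0·C ≤ i*(r^2/n - d^2), where D·C = t*d - (sum of entries 2 through r+1 of D), and ω' = ⌈mn/r⌉. -/
/-- `D·C = t·d − (sum of entries 2 through r+1 of D)`. -/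
def fatDot (d : ℤ) (r : ℕ) (p : ℤ × List ℤ) : ℤ :=
  p.1 * d - (p.2.take r).sum

/-!
As long as `i * r ≤ m * n`, the tail of `D_i` is as balanced as possible: it consists of `k`
entries `q + 1` followed by `n - k` entries `q`, where `n * q + k = m * n - i * r` and `k < n`.
Indeed, lowering the `r` largest entries of such a list by one and re-sorting gives another
list of this shape. The `r` largest entries of it sum to `r * q + min k r`, so
`n * (D_i·C - D_0·C + i * d ^ 2) = i * r ^ 2 + (r * k - n * min k r)`, and the last term lies
between `r ^ 2 - r * n` and `0`.
-/

open List

def levelList (n k : ℕ) (q : ℤ) : List ℤ :=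
  replicate k (q + 1) ++ replicate (n - k) q

section levelList

variable {n k r : ℕ} {q : ℤ}

theorem levelList_pairwise : (levelList n k q).Pairwise (· ≥ ·) := by
  refine pairwise_append.mpr ⟨pairwise_replicate.mpr (Or.inr le_rfl),
    pairwise_replicate.mpr (Or.inr le_rfl), ?_⟩
  intro a ha b hb
  rw [eq_of_mem_replicate ha, eq_of_mem_replicate hb]
  exact Int.le_add_one le_rfl

theorem insertionSort_eq_levelList {l : List ℤ} (h : l.Perm (levelList n k q)) :
    l.insertionSort (· ≥ ·) = levelList n k q :=
  Perm.eq_of_pairwise (fun _ _ _ _ hab hba => le_antisymm hba hab)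
    (pairwise_insertionSort _ l) levelList_pairwise ((perm_insertionSort _ l).trans h)

theorem sum_take_levelList (hrn : r ≤ n) :
    ((levelList n k q).take r).sum = r * q + min k r := by
  have hlen : min (r : ℤ) k + ((r - k : ℕ) : ℤ) = r := by omega
  rw [levelList, take_append, take_replicate, length_replicate, take_replicate, sum_append,
    sum_replicate, sum_replicate, nsmul_eq_mul, nsmul_eq_mul,
    min_eq_left (by omega : r - k ≤ n - k), Nat.cast_min, Nat.cast_min, min_comm (k : ℤ)]
  linear_combination q * hlen

theorem fatDot_levelList (d a : ℤ) (hrn : r ≤ n) :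
    fatDot d r (a, levelList n k q) = a * d - (r * q + min k r) := by
  rw [fatDot, sum_take_levelList hrn]

variable {d a : ℤ}

theorem fatStep_levelList_of_le (hq : 0 ≤ q) (hrk : r ≤ k) (hkn : k ≤ n) :
    fatStep d r (a, levelList n k q) = (a - d, levelList n (k - r) q) := by
  have htake : (levelList n k q).take r = replicate r (q + 1) := by
    rw [levelList, take_append_of_le_length (by simpa using hrk), take_replicate,
      min_eq_left hrk]
  have hdrop : (levelList n k q).drop r = replicate (k - r) (q + 1) ++ replicate (n - k) q := by
    rw [levelList, drop_append_of_le_length (by simpa using hrk), drop_replicate]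
  have hlowered : max (q + 1 - 1) 0 = q := by omega
  refine Prod.ext rfl (insertionSort_eq_levelList ?_)
  rw [htake, hdrop, map_replicate, hlowered, levelList, show n - (k - r) = n - k + r by omega,
    replicate_add]
  exact perm_append_comm.trans (by rw [append_assoc])

theorem fatStep_levelList_of_lt (hq : 1 ≤ q) (hkr : k < r) (hrn : r ≤ n) :
    fatStep d r (a, levelList n k q) = (a - d, levelList n (n - (r - k)) (q - 1)) := by
  have htake : (levelList n k q).take r = replicate k (q + 1) ++ replicate (r - k) q := by
    rw [levelList, take_append, take_replicate, length_replicate, take_replicate,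
      min_eq_right hkr.le, min_eq_left (by omega : r - k ≤ n - k)]
  have hdrop : (levelList n k q).drop r = replicate (n - r) q := by
    rw [levelList, drop_append, drop_replicate, length_replicate, drop_replicate,
      Nat.sub_eq_zero_of_le hkr.le, replicate_zero, nil_append, Nat.sub_sub_sub_cancel_right hkr.le]
  have hlowered : max (q + 1 - 1) 0 = q := by omega
  have hlowered' : max (q - 1) 0 = q - 1 := by omega
  refine Prod.ext rfl (insertionSort_eq_levelList ?_)
  rw [htake, hdrop, map_append, map_replicate, map_replicate, hlowered, hlowered', levelList,
    sub_add_cancel, show n - (n - (r - k)) = r - k by omega,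
    show n - (r - k) = k + (n - r) by omega, replicate_add, append_assoc, append_assoc]
  exact perm_append_comm.append_left _

theorem fatStep_levelList (hq : 0 ≤ q) (hkn : k < n) (hrn : r ≤ n)
    (hs : (r : ℤ) ≤ n * q + k) :
    ∃ k' q', k' < n ∧ 0 ≤ q' ∧ n * q' + k' = n * q + k - r ∧
      fatStep d r (a, levelList n k q) = (a - d, levelList n k' q') := by
  rcases le_or_gt r k with hrk | hkr
  · exact ⟨k - r, q, by omega, hq, by push_cast [hrk]; ring,
      fatStep_levelList_of_le hq hrk hkn.le⟩
  · have hq1 : 1 ≤ q := by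
      by_contra! hq1
      nlinarith
    refine ⟨n - (r - k), q - 1, by omega, by omega, ?_, fatStep_levelList_of_lt hq1 hkr hrn⟩
    rw [Nat.cast_sub (by omega), Nat.cast_sub hkr.le]
    ring

end levelList

theorem fatD_eq_levelList {n r : ℕ} (d t : ℤ) {m : ℤ} (hn : 0 < n) (hrn : r ≤ n)
    (hm : 0 ≤ m) : ∀ i : ℕ, (i : ℤ) * r ≤ m * n →
      ∃ k q, k < n ∧ 0 ≤ q ∧ n * q + k = m * n - i * r ∧
        fatD d r n t m i = (t - i * d, levelList n k q)
  | 0, _ => ⟨0, m, hn, hm, by ring, by simp [fatD, levelList]⟩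
  | i + 1, hi => by
    push_cast at hi
    obtain ⟨k, q, hkn, hq, hsum, hD⟩ :=
      fatD_eq_levelList d t hn hrn hm i (by linarith [(Nat.cast_nonneg r : (0 : ℤ) ≤ r)])
    obtain ⟨k', q', hk'n, hq', hsum', hstep⟩ :=
      fatStep_levelList (d := d) (a := t - i * d) hq hkn hrn (by linarith)
    refine ⟨k', q', hk'n, hq', by push_cast; linarith, ?_⟩
    rw [fatD, hD, hstep, Nat.cast_succ, add_one_mul, sub_sub]

theorem mul_sub_mul_min_mem_Icc {α : Type*} [CommRing α] [LinearOrder α] [IsStrictOrderedRing α]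
    {k r n : α} (hk : 0 ≤ k) (hkn : k ≤ n) (hr : 0 ≤ r) (hrn : r ≤ n) :
    r * k - n * min k r ∈ Set.Icc (r ^ 2 - r * n) 0 := by
  rcases le_total k r with h | h
  · rw [min_eq_left h]; constructor <;> nlinarith
  · rw [min_eq_right h]; constructor <;> nlinarith

theorem mul_lt_of_le_ceil_div_sub_one {K : Type*} [Field K] [LinearOrder K]
    [IsStrictOrderedRing K] [FloorRing K] {i r : ℕ} {a : ℤ}
    (h : (i : ℤ) ≤ ⌈(a : K) / r⌉ - 1) :
    (i : ℤ) * r < a := by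
  have hlt : ((i : ℤ) : K) < a / r := Int.lt_ceil.mp (by omega)
  rcases Nat.eq_zero_or_pos r with hr | hr
  · rw [hr, Nat.cast_zero, div_zero] at hlt
    exact absurd hlt (not_lt.mpr (by positivity))
  · exact_mod_cast (lt_div_iff₀ (by exact_mod_cast hr)).mp hlt

theorem fatDot_sub_fatDot_zero_eq {n r : ℕ} (d t : ℤ) {m : ℤ} (hn : 0 < n) (hrn : r ≤ n)
    (hm : 0 ≤ m) {i : ℕ} (hir : (i : ℤ) * r ≤ m * n) :
    ∃ k : ℕ, k ≤ n ∧
      ((fatDot d r (fatD d r n t m i) - fatDot d r (fatD d r n t m 0) : ℤ) : ℚ) =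
        i * ((r : ℚ) ^ 2 / n - d ^ 2) + (r * k - n * min (k : ℚ) r) / n := by
  obtain ⟨k, q, hkn, -, hsum, hD⟩ := fatD_eq_levelList d t hn hrn hm i hir
  have hD₀ : fatDot d r (fatD d r n t m 0) = t * d - r * m := by
    simp [fatDot, fatD, take_replicate, hrn]
  refine ⟨k, hkn.le, ?_⟩
  rw [hD, fatDot_levelList _ _ hrn, hD₀]
  field_simp
  push_cast [Nat.cast_min]
  linear_combination (-(r : ℚ)) * (by exact_mod_cast hsum : (n : ℚ) * q + k = m * n - i * r)

theorem stmt_10_general (n r : ℕ) (d m t : ℤ) (hrn : r ≤ n)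
    (i : ℕ) (hi : (i : ℤ) ≤ ⌈((m * n : ℤ) : ℚ) / (r : ℚ)⌉ - 1) :
    (i : ℚ) * ((r : ℚ) ^ 2 / n - (d : ℚ) ^ 2) - ((r : ℚ) - (r : ℚ) ^ 2 / n) ≤
      ((fatDot d r (fatD d r n t m i) - fatDot d r (fatD d r n t m 0) : ℤ) : ℚ) ∧
    ((fatDot d r (fatD d r n t m i) - fatDot d r (fatD d r n t m 0) : ℤ) : ℚ) ≤
      (i : ℚ) * ((r : ℚ) ^ 2 / n - (d : ℚ) ^ 2) := by
  have hir := mul_lt_of_le_ceil_div_sub_one hi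
  have hn : 0 < n := Nat.pos_of_ne_zero <| by
    rintro rfl
    rw [Nat.cast_zero, mul_zero] at hir
    exact hir.not_ge (by positivity)
  have hm : 0 ≤ m := by nlinarith
  obtain ⟨k, hkn, hdiff⟩ := fatDot_sub_fatDot_zero_eq d t hn hrn hm hir.le
  obtain ⟨hlo, hhi⟩ := mul_sub_mul_min_mem_Icc (k := (k : ℚ)) (r := r) (n := n)
    (by positivity) (by exact_mod_cast hkn) (by positivity) (by exact_mod_cast hrn)
  have hnQ : (0 : ℚ) < n := by exact_mod_cast hn
  rw [hdiff]
  constructor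
  · have : (r : ℚ) ^ 2 / n - r ≤ (r * k - n * min (k : ℚ) r) / n := by
      rw [le_div_iff₀ hnQ, sub_mul, div_mul_cancel₀ _ hnQ.ne']
      linarith
    linarith
  · have : (r * k - n * min (k : ℚ) r) / n ≤ 0 := div_nonpos_of_nonpos_of_nonneg hhi hnQ.le
    linarith

theorem stmt_10 (n r : ℕ) (d m t : ℤ) (hr : 0 < r) (hrn : r ≤ n) (hm : 0 ≤ m)
    (i : ℕ) (hi : (i : ℤ) ≤ ⌈((m * n : ℤ) : ℚ) / (r : ℚ)⌉ - 1) :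
    (i : ℚ) * ((r : ℚ) ^ 2 / n - (d : ℚ) ^ 2) - ((r : ℚ) - (r : ℚ) ^ 2 / n) ≤
      ((fatDot d r (fatD d r n t m i) - fatDot d r (fatD d r n t m 0) : ℤ) : ℚ) ∧
    ((fatDot d r (fatD d r n t m i) - fatDot d r (fatD d r n t m 0) : ℤ) : ℚ) ≤
      (i : ℚ) * ((r : ℚ) ^ 2 / n - (d : ℚ) ^ 2) :=
  stmt_10_general n r d m t hrn i hi
end
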